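/- Let G₁ ~ Exponential(1) and G₂ ~ Gamma(D,1) be independent, with D > 0, and let P, α, θ > 0. Define M = G₁/(Pθ G₂ + 1) and Γ = Pα M. Then the CDF of Γ is F(x) = 1 - e^{-x/(Pα)}/((θ/α)x + 1)^D for x ≥ 0. -/

import Mathlib

open MeasureTheory ProbabilityTheory Real

/-!
With `c = x/(Pα)`, the event `Γ > x` is `G₁ > c (Pθ G₂ + 1)`. Conditioning on `G₂` and using the
exponential tail gives `P(Γ > x) = e^{-c} E[e^{-cPθ G₂}]`, and the Laplace transform of the
gamma law is `E[e^{-s G₂}] = (1 + s)^{-D}`: the factor `e^{-sy}` turns the `Gamma(D, 1)` density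
into `(1 + s)^{-D}` times the `Gamma(D, 1 + s)` density.
-/

open Set

namespace ProbabilityTheory

lemma IndepFun.measure_setOf_comp_lt_eq_lintegral {Ω β : Type*} [MeasurableSpace Ω]
    [MeasurableSpace β] {μ : Measure Ω} [IsFiniteMeasure μ] {X : Ω → ℝ} {Y : Ω → β}
    (hX : Measurable X) (hY : Measurable Y) (hXY : IndepFun X Y μ) {f : β → ℝ}
    (hf : Measurable f) :
    μ {ω | f (Y ω) < X ω} = ∫⁻ y, μ.map X (Ioi (f y)) ∂μ.map Y := by
  have hS : MeasurableSet {p : β × ℝ | f p.1 < p.2} :=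
    measurableSet_lt (hf.comp measurable_fst) measurable_snd
  rw [show {ω | f (Y ω) < X ω} = (fun ω ↦ (Y ω, X ω)) ⁻¹' {p | f p.1 < p.2} from rfl,
    ← Measure.map_apply (hY.prodMk hX) hS,
    hXY.symm.map_prod_eq_prod_map_map hY.aemeasurable hX.aemeasurable, Measure.prod_apply hS]
  rfl

lemma expMeasure_Ioi {r t : ℝ} (hr : 0 < r) (ht : 0 ≤ t) :
    expMeasure r (Ioi t) = ENNReal.ofReal (exp (-(r * t))) := by
  have := isProbabilityMeasure_expMeasure hr
  rw [← ofReal_measureReal, ← compl_Iic, probReal_compl_eq_one_sub measurableSet_Iic,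
    ← cdf_eq_real, cdf_expMeasure_eq hr, if_pos ht, sub_sub_cancel]

lemma measurable_gammaPDF (a r : ℝ) : Measurable (gammaPDF a r) :=
  (measurable_gammaPDFReal a r).ennreal_ofReal

lemma ae_nonneg_gammaMeasure (a r : ℝ) : ∀ᵐ y ∂gammaMeasure a r, 0 ≤ y := by
  rw [gammaMeasure, ae_withDensity_iff (measurable_gammaPDF a r)]
  exact ae_of_all _ fun y hy ↦ not_lt.mp fun hneg ↦ hy (gammaPDF_of_neg hneg)

lemma gammaPDF_mul_exp_neg_mul {a r s : ℝ} (hr : 0 < r) (hrs : 0 < r + s) (y : ℝ) :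
    gammaPDF a r y * ENNReal.ofReal (exp (-(s * y)))
      = ENNReal.ofReal ((r / (r + s)) ^ a) * gammaPDF a (r + s) y := by
  rcases lt_or_ge y 0 with hy | hy
  · simp [gammaPDF_of_neg hy]
  rw [gammaPDF_of_nonneg hy, gammaPDF_of_nonneg hy, ← ENNReal.ofReal_mul' (exp_nonneg _),
    ← ENNReal.ofReal_mul (rpow_nonneg (div_nonneg hr.le hrs.le) a)]
  congr 1
  have hexp : exp (-(r * y)) * exp (-(s * y)) = exp (-((r + s) * y)) := by
    rw [← exp_add]; ring_nf
  rw [div_rpow hr.le hrs.le, mul_assoc, hexp]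
  field_simp [(rpow_pos_of_pos hrs a).ne']

lemma lintegral_exp_neg_mul_gammaMeasure {a r s : ℝ} (ha : 0 < a) (hr : 0 < r)
    (hrs : 0 < r + s) :
    ∫⁻ y, ENNReal.ofReal (exp (-(s * y))) ∂gammaMeasure a r
      = ENNReal.ofReal ((r / (r + s)) ^ a) := by
  rw [gammaMeasure,
    lintegral_withDensity_eq_lintegral_mul _ (measurable_gammaPDF a r) (by fun_prop)]
  simp_rw [Pi.mul_apply, gammaPDF_mul_exp_neg_mul hr hrs]
  rw [lintegral_const_mul _ (measurable_gammaPDF a (r + s)),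
    lintegral_gammaPDF_eq_one ha hrs, mul_one]

lemma IndepFun.measure_mul_add_lt_eq_of_exp_gamma {Ω : Type*} [MeasurableSpace Ω]
    {μ : Measure Ω} [IsFiniteMeasure μ] {X Y : Ω → ℝ} (hX : Measurable X) (hY : Measurable Y)
    (hXY : IndepFun X Y μ) {r a ρ : ℝ} (hr : 0 < r) (ha : 0 < a) (hρ : 0 < ρ)
    (hXlaw : μ.map X = expMeasure r) (hYlaw : μ.map Y = gammaMeasure a ρ)
    {b c : ℝ} (hb : 0 ≤ b) (hc : 0 ≤ c) :
    μ {ω | b * Y ω + c < X ω} = ENNReal.ofReal (exp (-(r * c)) * (ρ / (ρ + r * b)) ^ a) := by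
  calc μ {ω | b * Y ω + c < X ω}
      _ = ∫⁻ y, expMeasure r (Ioi (b * y + c)) ∂gammaMeasure a ρ := by
        rw [hXY.measure_setOf_comp_lt_eq_lintegral (f := fun y ↦ b * y + c) hX hY (by fun_prop),
          hXlaw, hYlaw]
      _ = ∫⁻ y, ENNReal.ofReal (exp (-(r * c))) * ENNReal.ofReal (exp (-(r * b * y)))
            ∂gammaMeasure a ρ := by
        refine lintegral_congr_ae ?_
        filter_upwards [ae_nonneg_gammaMeasure a ρ] with y hy
        rw [expMeasure_Ioi hr (by positivity), ← ENNReal.ofReal_mul (exp_nonneg _), ← exp_add]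
        ring_nf
      _ = _ := by
        rw [lintegral_const_mul _ (by fun_prop),
          lintegral_exp_neg_mul_gammaMeasure ha hρ (by positivity),
          ← ENNReal.ofReal_mul (exp_nonneg _)]

end ProbabilityTheory

/-- Closed-form SINR CDF of the common stream: for independent `G₁ ~ Exp(1)` and
`G₂ ~ Gamma(D,1)`, `M = G₁/(PθG₂+1)` and `Γ = PαM`, the CDF of `Γ` is
`F(x) = 1 - e^{-x/(Pα)}/((θ/α)x+1)^D` for `x ≥ 0`. -/
theorem sinr_cdf_common_stream
    {Ω : Type*} [MeasureSpace Ω] (μ : Measure Ω) [IsProbabilityMeasure μ]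
    (G₁ G₂ : Ω → ℝ) (hG₁ : Measurable G₁) (hG₂ : Measurable G₂)
    (hindep : IndepFun G₁ G₂ μ)
    (hdist₁ : μ.map G₁ = expMeasure 1)
    (D : ℝ) (hD : 0 < D) (hdist₂ : μ.map G₂ = gammaMeasure D 1)
    (P α θ : ℝ) (hP : 0 < P) (hα : 0 < α) (hθ : 0 < θ) :
    ∀ x : ℝ, 0 ≤ x →
      (μ {ω | P * α * (G₁ ω / (P * θ * G₂ ω + 1)) ≤ x}).toReal
        = 1 - Real.exp (-(x / (P * α))) / ((θ / α) * x + 1) ^ D := by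
  intro x hx
  set c := x / (P * α)
  have hG₂_nonneg : ∀ᵐ ω ∂μ, 0 ≤ G₂ ω :=
    ae_of_ae_map hG₂.aemeasurable (hdist₂ ▸ ae_nonneg_gammaMeasure D 1)
  set T : Set Ω := {ω | c * (P * θ) * G₂ ω + c < G₁ ω}
  -- without the ascription `ᶜ` would be the pointwise complement on `Ω → Prop`
  have hevent : {ω | P * α * (G₁ ω / (P * θ * G₂ ω + 1)) ≤ x} =ᵐ[μ] (Tᶜ : Set Ω) := by
    refine Filter.eventuallyEq_set.mpr ?_
    filter_upwards [hG₂_nonneg] with ω hω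
    have hthreshold : c * (P * θ) * G₂ ω + c = x * (P * θ * G₂ ω + 1) / (P * α) := by ring
    change _ ≤ x ↔ ¬ (_ : ℝ) < _
    rw [not_lt, hthreshold, ← le_div_iff₀' (by positivity), div_le_iff₀ (by positivity),
      div_mul_eq_mul_div]
  have htail := hindep.measure_mul_add_lt_eq_of_exp_gamma hG₁ hG₂ one_pos hD one_pos hdist₁
    hdist₂ (b := c * (P * θ)) (c := c) (by positivity) (by positivity)
  have hbase : 1 + 1 * (c * (P * θ)) = θ / α * x + 1 := by
    simp only [c]; field_simp; ring
  rw [measure_congr hevent, ← measureReal_def, probReal_compl_eq_one_sub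
    (measurableSet_lt (by fun_prop) hG₁), measureReal_def, htail,
    ENNReal.toReal_ofReal (by positivity), hbase, one_mul, one_div, inv_rpow (by positivity),
    ← div_eq_mul_inv]
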